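/- Let T be a finite tree with at least one edge and let T' be obtained from T by attaching one new pendant edge at an arbitrary vertex of T (adding one new vertex adjacent only to that vertex). If λ_max(R_T) = 0, then λ_max(R_{T'}) > 0. -/

import Mathlib

open Finset Matrix

/-- The Ricci matrix of a graph, indexed by edges: diagonal entry `-(1/d_x + 1/d_y)`
for an edge `{x,y}`, entry `1/d_z` for distinct edges sharing the vertex `z`, and `0`
for disjoint edges.  Here the degree of `v` is `(G.neighborSet v).ncard`. -/
noncomputable def ricciMatrix {V : Type*} (G : SimpleGraph V) [Fintype V] [DecidableEq V] :
    Matrix G.edgeSet G.edgeSet ℝ := fun e f =>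
  if (e : Sym2 V) = (f : Sym2 V) then
    -∑ v : V, if v ∈ (e : Sym2 V) then 1 / ((G.neighborSet v).ncard : ℝ) else 0
  else
    ∑ v : V, if v ∈ (e : Sym2 V) ∧ v ∈ (f : Sym2 V) then 1 / ((G.neighborSet v).ncard : ℝ) else 0

/-- The largest eigenvalue of a real matrix. -/
noncomputable def lambdaMax {n : Type*} [Fintype n] (M : Matrix n n ℝ) : ℝ :=
  sSup {t : ℝ | ∃ w : n → ℝ, w ≠ 0 ∧ M.mulVec w = t • w}

/-- The graph obtained from `G` by attaching one new pendant vertex (`none`) adjacent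
only to the vertex `v`. -/
def attachPendant {V : Type*} (G : SimpleGraph V) (v : V) : SimpleGraph (Option V) where
  Adj x y := match x, y with
    | none, none => False
    | none, some b => b = v
    | some a, none => a = v
    | some a, some b => G.Adj a b
  symm := by
    constructor
    rintro (_ | a) (_ | b) h
    · exact h
    · exact h
    · exact h
    · exact G.adj_symm h
  loopless := by
    constructor
    rintro (_ | a) h
    · exact h
    · exact G.irrefl h

instance {V : Type*} (G : SimpleGraph V) [DecidableEq V] [DecidableRel G.Adj] (v : V) :
    DecidableRel (attachPendant G v).Adj := fun x y =>
  match x, y with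
  | none, none => isFalse id
  | none, some b => inferInstanceAs (Decidable (b = v))
  | some a, none => inferInstanceAs (Decidable (a = v))
  | some a, some b => inferInstanceAs (Decidable (G.Adj a b))

/-!
Write `Q(x) = xᵀ R x = ∑_a ((∑_{e ∋ a} x_e)² - 2 ∑_{e ∋ a} x_e²) / d_a`. If `λ_max(R_T) = 0`,
then `Q ≤ 0` and some `w ≠ 0` has `R_T w = 0`; as `Q(|w|) ≥ Q(w) = 0`, also `R_T |w| = 0`.
Entries of `R_T` between distinct adjacent edges are positive, so a nonnegative kernel vector that
vanishes on all edges at one vertex vanishes on the whole connected tree: hence `|w|` is nonzero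
on some edge at `v`. Put `A = ∑_{e ∋ v} |w_e|`, `B = ∑_{e ∋ v} w_e²`, `D = d_v`. Extending `|w|`
by `A / (D + 2)` on the new edge only changes the terms of `Q` at `v` and at the new leaf, and
raises `Q` by `2 ((D + 2) B - A²) / (D (D + 1) (D + 2)) > 0`, by Cauchy–Schwarz `A² ≤ D B`.
So `Q_{T'}` takes a positive value, and `λ_max(R_{T'}) > 0` by the Rayleigh bound.
-/

namespace Matrix

variable {n : Type*} [Fintype n] {M : Matrix n n ℝ}

theorem IsHermitian.mulVec_eq_zero_of_dotProduct_mulVec_eq_zero (hM : M.IsHermitian)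
    (hM0 : ∀ x, x ⬝ᵥ M *ᵥ x ≤ 0) {u : n → ℝ} (hu : u ⬝ᵥ M *ᵥ u = 0) : M *ᵥ u = 0 := by
  have hneg : (-M).PosSemidef := PosSemidef.of_dotProduct_mulVec_nonneg hM.neg fun x => by
    simpa [neg_mulVec] using hM0 x
  simpa [neg_mulVec, hu] using (hneg.dotProduct_mulVec_zero_iff u).1

variable [DecidableEq n]

theorem setOf_mulVec_eq_smul_eq_spectrum :
    {t : ℝ | ∃ w : n → ℝ, w ≠ 0 ∧ M *ᵥ w = t • w} = spectrum ℝ M := by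
  ext t
  rw [Set.mem_ofPred_eq, ← spectrum_toLin', ← Module.End.hasEigenvalue_iff_mem_spectrum,
    Module.End.hasEigenvalue_iff, Submodule.ne_bot_iff]
  simp [and_comm]

theorem lambdaMax_eq_sSup_spectrum : lambdaMax M = sSup (spectrum ℝ M) :=
  congrArg sSup setOf_mulVec_eq_smul_eq_spectrum

theorem le_lambdaMax_of_mem_spectrum {t : ℝ} (ht : t ∈ spectrum ℝ M) : t ≤ lambdaMax M :=
  lambdaMax_eq_sSup_spectrum (M := M) ▸ le_csSup (finite_spectrum M).bddAbove ht

theorem IsHermitian.exists_mulVec_eq_lambdaMax_smul [Nonempty n] (hM : M.IsHermitian) :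
    ∃ w : n → ℝ, w ≠ 0 ∧ M *ᵥ w = lambdaMax M • w := by
  have hne : (spectrum ℝ M).Nonempty :=
    hM.spectrum_real_eq_range_eigenvalues ▸ Set.range_nonempty _
  have h := hne.csSup_mem (finite_spectrum M)
  rwa [← lambdaMax_eq_sSup_spectrum, ← setOf_mulVec_eq_smul_eq_spectrum] at h

theorem IsHermitian.posSemidef_lambdaMax_smul_one_sub (hM : M.IsHermitian) :
    (lambdaMax M • 1 - M).PosSemidef := by
  rw [posSemidef_iff_isHermitian_and_spectrum_nonneg, ← Algebra.algebraMap_eq_smul_one,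
    ← spectrum.singleton_sub_eq, Algebra.algebraMap_eq_smul_one]
  refine ⟨(isHermitian_one.smul (IsSelfAdjoint.all _)).sub hM, ?_⟩
  rintro _ ⟨_, rfl, t, ht, rfl⟩
  exact sub_nonneg.2 (le_lambdaMax_of_mem_spectrum ht)

theorem IsHermitian.dotProduct_mulVec_le_lambdaMax_mul (hM : M.IsHermitian) (x : n → ℝ) :
    x ⬝ᵥ M *ᵥ x ≤ lambdaMax M * (x ⬝ᵥ x) := by
  have := hM.posSemidef_lambdaMax_smul_one_sub.dotProduct_mulVec_nonneg x
  rw [star_trivial, sub_mulVec, smul_mulVec, one_mulVec, dotProduct_sub, dotProduct_smul,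
    smul_eq_mul] at this
  linarith

end Matrix

namespace SimpleGraph

section Incidence

variable {V : Type*} [DecidableEq V] (G : SimpleGraph V) [Fintype G.edgeSet]

def incidenceSum (x : G.edgeSet → ℝ) (a : V) : ℝ :=
  ∑ e : G.edgeSet, if a ∈ (e : Sym2 V) then x e else 0

theorem incidenceSum_one (a : V) : G.incidenceSum 1 a = (G.neighborSet a).ncard := by
  let e : {e : G.edgeSet // a ∈ (e : Sym2 V)} ≃ G.incidenceSet a :=
    { toFun e := ⟨e.1.1, e.1.2, e.2⟩
      invFun e := ⟨⟨e.1, e.2.1⟩, e.2.2⟩ }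
  rw [← Nat.card_coe_set_eq, ← Nat.card_congr (e.trans (G.incidenceSetEquivNeighborSet a)),
    Nat.card_eq_fintype_card, Fintype.card_subtype]
  simp [incidenceSum, Finset.sum_boole]

theorem sq_incidenceSum_le (x : G.edgeSet → ℝ) (a : V) :
    G.incidenceSum x a ^ 2 ≤ (G.neighborSet a).ncard * G.incidenceSum (x ^ 2) a := by
  have := Finset.sum_mul_sq_le_sq_mul_sq Finset.univ
    (fun e : G.edgeSet => if a ∈ (e : Sym2 V) then (1 : ℝ) else 0)
    (fun e => if a ∈ (e : Sym2 V) then x e else 0)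
  rw [← incidenceSum_one]
  simpa [incidenceSum, ite_pow, ← ite_and] using this

theorem incidenceSum_pos {x : G.edgeSet → ℝ} (hx : 0 ≤ x) {a : V} {e : G.edgeSet}
    (ha : a ∈ (e : Sym2 V)) (he : 0 < x e) : 0 < G.incidenceSum x a :=
  Finset.sum_pos' (fun f _ => by split_ifs; exacts [hx f, le_rfl])
    ⟨e, Finset.mem_univ e, by simpa [ha]⟩

end Incidence

section Ricci

variable {V : Type*} [Fintype V] [DecidableEq V] (G : SimpleGraph V)

theorem ricciMatrix_isHermitian : (ricciMatrix G).IsHermitian := by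
  ext e f
  simp only [conjTranspose_apply, star_trivial, ricciMatrix, eq_comm (a := (f : Sym2 V)), and_comm]
  split_ifs with h
  · rw [h]
  · rfl

theorem ricciMatrix_apply (e f : G.edgeSet) : ricciMatrix G e f =
    (∑ a : V, if a ∈ (e : Sym2 V) ∧ a ∈ (f : Sym2 V) then 1 / ((G.neighborSet a).ncard : ℝ) else 0)
      - if e = f then 2 * ∑ a : V, if a ∈ (e : Sym2 V) then 1 / ((G.neighborSet a).ncard : ℝ) else 0
        else 0 := by
  by_cases h : e = f
  · subst h
    simp only [ricciMatrix, if_true, and_self]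
    ring
  · simp [ricciMatrix, h, Subtype.coe_ne_coe.2 h]

theorem ricciMatrix_nonneg_of_ne {e f : G.edgeSet} (hef : e ≠ f) : 0 ≤ ricciMatrix G e f := by
  rw [ricciMatrix_apply, if_neg hef, sub_zero]
  exact Finset.sum_nonneg fun a _ => by positivity

theorem ricciMatrix_pos_of_mem_of_mem {e f : G.edgeSet} (hef : e ≠ f) {z : V}
    (hze : z ∈ (e : Sym2 V)) (hzf : z ∈ (f : Sym2 V)) : 0 < ricciMatrix G e f := by
  have hadj : G.Adj z (Sym2.Mem.other hze) := by
    rw [← mem_edgeSet, Sym2.other_spec]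
    exact e.2
  have hdeg : (0 : ℝ) < (G.neighborSet z).ncard :=
    Nat.cast_pos.2 ((Set.ncard_pos (Set.toFinite _)).2 ⟨_, hadj⟩)
  rw [ricciMatrix_apply, if_neg hef, sub_zero]
  exact Finset.sum_pos' (fun a _ => by positivity) ⟨z, Finset.mem_univ z, by simp [hze, hzf, hdeg]⟩

variable [Fintype G.edgeSet]

theorem dotProduct_mulVec_ricciMatrix (x : G.edgeSet → ℝ) :
    x ⬝ᵥ ricciMatrix G *ᵥ x = ∑ a : V,
      (G.incidenceSum x a ^ 2 - 2 * G.incidenceSum (x ^ 2) a) / (G.neighborSet a).ncard := by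
  simp only [dotProduct, mulVec, ricciMatrix_apply, sub_mul, Finset.sum_sub_distrib, mul_sub,
    ite_mul, zero_mul, Finset.sum_ite_eq, Finset.mem_univ, if_true, incidenceSum, sq,
    Finset.sum_mul, Finset.mul_sum, sub_div, Finset.sum_div]
  congr 1
  · conv_lhs => arg 2; ext e; rw [Finset.sum_comm]
    conv_lhs => rw [Finset.sum_comm]
    conv_rhs => arg 2; ext a; rw [Finset.sum_comm]
    refine Finset.sum_congr rfl fun a _ => Finset.sum_congr rfl fun e _ =>
      Finset.sum_congr rfl fun f _ => ?_
    split_ifs <;> simp_all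
    ring
  · rw [Finset.sum_comm]
    refine Finset.sum_congr rfl fun a _ => Finset.sum_congr rfl fun e _ => ?_
    split_ifs <;> simp
    ring

theorem dotProduct_mulVec_ricciMatrix_le_abs (x : G.edgeSet → ℝ) :
    x ⬝ᵥ ricciMatrix G *ᵥ x ≤ |x| ⬝ᵥ ricciMatrix G *ᵥ |x| := by
  have habs_sq : |x| ^ 2 = x ^ 2 := funext fun e => by simp
  rw [dotProduct_mulVec_ricciMatrix, dotProduct_mulVec_ricciMatrix, habs_sq]
  refine Finset.sum_le_sum fun a _ => ?_
  have h : |G.incidenceSum x a| ≤ G.incidenceSum |x| a :=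
    (Finset.abs_sum_le_sum_abs _ _).trans_eq
      (Finset.sum_congr rfl fun e _ => by split_ifs <;> simp)
  gcongr (?_ - _) / _
  exact sq_le_sq.2 (h.trans (le_abs_self _))

theorem eq_zero_of_ricciMatrix_mulVec_eq_zero_of_mem {u : G.edgeSet → ℝ} (hu : 0 ≤ u)
    (hRu : ricciMatrix G *ᵥ u = 0) {e f : G.edgeSet} (he : u e = 0) {z : V}
    (hze : z ∈ (e : Sym2 V)) (hzf : z ∈ (f : Sym2 V)) : u f = 0 := by
  obtain rfl | hef := eq_or_ne e f
  · exact he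
  have hterms : ∀ g ∈ Finset.univ, 0 ≤ ricciMatrix G e g * u g := fun g _ => by
    obtain rfl | heg := eq_or_ne e g
    · simp [he]
    · exact mul_nonneg (G.ricciMatrix_nonneg_of_ne heg) (hu g)
  have hrow : ∑ g, ricciMatrix G e g * u g = 0 := by simpa [mulVec, dotProduct] using congrFun hRu e
  have := (Finset.sum_eq_zero_iff_of_nonneg hterms).1 hrow f (Finset.mem_univ f)
  exact (mul_eq_zero.1 this).resolve_left (G.ricciMatrix_pos_of_mem_of_mem hef hze hzf).ne'

theorem forall_mem_eq_zero_of_reachable {u : G.edgeSet → ℝ} (hu : 0 ≤ u)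
    (hRu : ricciMatrix G *ᵥ u = 0) {x y : V} (hxy : G.Reachable x y)
    (hx : ∀ e : G.edgeSet, x ∈ (e : Sym2 V) → u e = 0) :
    ∀ e : G.edgeSet, y ∈ (e : Sym2 V) → u e = 0 := by
  obtain ⟨p⟩ := hxy
  induction p with
  | nil => exact hx
  | @cons x w y hadj p ih =>
    refine ih fun f hwf => G.eq_zero_of_ricciMatrix_mulVec_eq_zero_of_mem hu hRu
      (e := ⟨s(x, w), hadj⟩) (hx _ (Sym2.mem_mk_left x w)) (Sym2.mem_mk_right x w) hwf

theorem eq_zero_of_ricciMatrix_mulVec_eq_zero (hG : G.Preconnected) {u : G.edgeSet → ℝ}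
    (hu : 0 ≤ u) (hRu : ricciMatrix G *ᵥ u = 0) {v : V}
    (hv : ∀ e : G.edgeSet, v ∈ (e : Sym2 V) → u e = 0) : u = 0 :=
  funext fun e => G.forall_mem_eq_zero_of_reachable hu hRu (hG v _) hv e
    (Sym2.out_fst_mem (e : Sym2 V))

end Ricci

end SimpleGraph

namespace attachPendant

open SimpleGraph

variable {V : Type*} (G : SimpleGraph V) (v : V)

def pendantEdge : (attachPendant G v).edgeSet := ⟨s(none, some v), rfl⟩

def liftEdge (e : G.edgeSet) : (attachPendant G v).edgeSet :=
  ⟨e.1.map some, by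
    obtain ⟨e, he⟩ := e
    induction e using Sym2.ind
    exact he⟩

variable {G v}

@[simp] theorem none_mem_pendantEdge : none ∈ (pendantEdge G v : Sym2 (Option V)) :=
  Sym2.mem_mk_left _ _

@[simp] theorem some_mem_pendantEdge {a : V} :
    some a ∈ (pendantEdge G v : Sym2 (Option V)) ↔ a = v := by
  simp [pendantEdge]

@[simp] theorem none_not_mem_liftEdge (e : G.edgeSet) :
    none ∉ (liftEdge G v e : Sym2 (Option V)) := by
  simp [liftEdge, Sym2.mem_map]

@[simp] theorem some_mem_liftEdge {a : V} {e : G.edgeSet} :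
    some a ∈ (liftEdge G v e : Sym2 (Option V)) ↔ a ∈ (e : Sym2 V) := by
  simp [liftEdge, Sym2.mem_map]

theorem bijective_elim_pendantEdge_liftEdge :
    Function.Bijective fun o : Option G.edgeSet => o.elim (pendantEdge G v) (liftEdge G v) := by
  constructor
  · rintro (_ | e) (_ | f) h
    · rfl
    · simpa using congrArg (none ∈ ·.1) h
    · simpa using congrArg (none ∈ ·.1) h
    · exact congrArg some (Subtype.ext (Sym2.map.injective (Option.some_injective V)
        (congrArg Subtype.val h)))
  · rintro ⟨e', he'⟩
    induction e' using Sym2.ind with | _ x y => ?_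
    rcases x with _ | a <;> rcases y with _ | b
    · exact absurd he' id
    · obtain rfl : b = v := he'
      exact ⟨none, rfl⟩
    · obtain rfl : a = v := he'
      exact ⟨none, Subtype.ext Sym2.eq_swap⟩
    · exact ⟨some ⟨s(a, b), he'⟩, rfl⟩

variable (G v) in
noncomputable def edgeEquiv : Option G.edgeSet ≃ (attachPendant G v).edgeSet :=
  Equiv.ofBijective _ bijective_elim_pendantEdge_liftEdge

variable (v) in
noncomputable def extend (u : G.edgeSet → ℝ) (s : ℝ) : (attachPendant G v).edgeSet → ℝ :=
  fun e => ((edgeEquiv G v).symm e).elim s u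

@[simp] theorem extend_pendantEdge (u : G.edgeSet → ℝ) (s : ℝ) :
    extend v u s (pendantEdge G v) = s :=
  congrArg (Option.elim · s u) ((edgeEquiv G v).symm_apply_apply none)

@[simp] theorem extend_comp_liftEdge (u : G.edgeSet → ℝ) (s : ℝ) :
    extend v u s ∘ liftEdge G v = u :=
  funext fun e => congrArg (Option.elim · s u) ((edgeEquiv G v).symm_apply_apply (some e))

theorem extend_sq (u : G.edgeSet → ℝ) (s : ℝ) : extend v u s ^ 2 = extend v (u ^ 2) (s ^ 2) := by
  funext e
  simp only [extend, Pi.pow_apply]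
  cases (edgeEquiv G v).symm e <;> rfl

variable [Fintype G.edgeSet] [Fintype (attachPendant G v).edgeSet]

theorem sum_edgeSet (F : (attachPendant G v).edgeSet → ℝ) :
    ∑ e, F e = F (pendantEdge G v) + ∑ e, F (liftEdge G v e) :=
  (Fintype.sum_equiv (edgeEquiv G v) _ F fun _ => rfl).symm.trans (Fintype.sum_option _)

variable [DecidableEq V]

theorem incidenceSum_none (f : (attachPendant G v).edgeSet → ℝ) :
    (attachPendant G v).incidenceSum f none = f (pendantEdge G v) := by
  simp [incidenceSum, sum_edgeSet]

theorem incidenceSum_some (f : (attachPendant G v).edgeSet → ℝ) (a : V) :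
    (attachPendant G v).incidenceSum f (some a) =
      (if a = v then f (pendantEdge G v) else 0) + G.incidenceSum (f ∘ liftEdge G v) a := by
  simp [incidenceSum, sum_edgeSet]

theorem ncard_neighborSet_none : ((attachPendant G v).neighborSet none).ncard = (1 : ℝ) := by
  rw [← incidenceSum_one, incidenceSum_none, Pi.one_apply]

theorem ncard_neighborSet_some (a : V) : ((attachPendant G v).neighborSet (some a)).ncard =
    ((G.neighborSet a).ncard : ℝ) + if a = v then 1 else 0 := by
  rw [← incidenceSum_one, incidenceSum_some, ← incidenceSum_one, add_comm]
  rfl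

theorem dotProduct_mulVec_ricciMatrix_extend [Fintype V] (u : G.edgeSet → ℝ) (s : ℝ) :
    extend v u s ⬝ᵥ ricciMatrix (attachPendant G v) *ᵥ extend v u s =
      u ⬝ᵥ ricciMatrix G *ᵥ u - s ^ 2
        + ((s + G.incidenceSum u v) ^ 2 - 2 * (s ^ 2 + G.incidenceSum (u ^ 2) v))
          / ((G.neighborSet v).ncard + 1)
        - (G.incidenceSum u v ^ 2 - 2 * G.incidenceSum (u ^ 2) v) / (G.neighborSet v).ncard := by
  rw [dotProduct_mulVec_ricciMatrix, dotProduct_mulVec_ricciMatrix, Fintype.sum_option, extend_sq]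
  simp only [incidenceSum_none, incidenceSum_some, ncard_neighborSet_none, ncard_neighborSet_some,
    extend_pendantEdge, extend_comp_liftEdge]
  set T : V → ℝ := fun a =>
    (G.incidenceSum u a ^ 2 - 2 * G.incidenceSum (u ^ 2) a) / (G.neighborSet a).ncard
  have hsplit : ∀ a, (((if a = v then s else 0) + G.incidenceSum u a) ^ 2
      - 2 * ((if a = v then s ^ 2 else 0) + G.incidenceSum (u ^ 2) a))
        / ((G.neighborSet a).ncard + if a = v then 1 else 0) = T a + if a = v then
          ((s + G.incidenceSum u v) ^ 2 - 2 * (s ^ 2 + G.incidenceSum (u ^ 2) v))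
            / ((G.neighborSet v).ncard + 1) - T v else 0 := by
    intro a
    split_ifs with h
    · subst h; ring
    · simp [T]
  simp only [hsplit, Finset.sum_add_distrib, Finset.sum_ite_eq', Finset.mem_univ, if_true]
  ring

theorem exists_dotProduct_mulVec_ricciMatrix_pos [Fintype V] {u : G.edgeSet → ℝ}
    (hu : 0 ≤ u ⬝ᵥ ricciMatrix G *ᵥ u) {e : G.edgeSet} (hve : v ∈ (e : Sym2 V)) (he : u e ≠ 0) :
    ∃ φ, 0 < φ ⬝ᵥ ricciMatrix (attachPendant G v) *ᵥ φ := by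
  set A := G.incidenceSum u v
  set B := G.incidenceSum (u ^ 2) v
  set D : ℝ := ((G.neighborSet v).ncard : ℝ)
  have hB : 0 < B := G.incidenceSum_pos (fun f => sq_nonneg (u f)) hve (sq_pos_of_ne_zero he)
  have hD : 0 < D := by
    rw [show D = G.incidenceSum 1 v from (G.incidenceSum_one v).symm]
    exact G.incidenceSum_pos zero_le_one hve one_pos
  have hAB : A ^ 2 ≤ D * B := G.sq_incidenceSum_le u v
  -- `A / (D + 2)` maximises the gain below as a function of the new entry.
  refine ⟨extend v u (A / (D + 2)), ?_⟩
  have hgain : -(A / (D + 2)) ^ 2 + ((A / (D + 2) + A) ^ 2 - 2 * ((A / (D + 2)) ^ 2 + B)) / (D + 1)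
      - (A ^ 2 - 2 * B) / D = 2 * (B * (D + 2) - A ^ 2) / (D * (D + 1) * (D + 2)) := by
    field_simp
    ring
  have hpos : 0 < 2 * (B * (D + 2) - A ^ 2) / (D * (D + 1) * (D + 2)) := by
    apply div_pos
    · nlinarith
    · positivity
  rw [dotProduct_mulVec_ricciMatrix_extend]
  linarith

end attachPendant

/-- **Strict crossing of the zero level set.**
If `T` is a finite tree with at least one edge, `T'` is obtained from `T` by attaching
one pendant edge at an arbitrary vertex `v`, and `λ_max(R_T) = 0`, then
`λ_max(R_{T'}) > 0`. -/
theorem lambdaMax_pos_attachPendant_of_zero {V : Type*} [Fintype V] [DecidableEq V]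
    (G : SimpleGraph V) [DecidableRel G.Adj] (hT : G.IsTree) (hE : G.edgeSet.Nonempty)
    (v : V) (h : lambdaMax (ricciMatrix G) = 0) :
    0 < lambdaMax (ricciMatrix (attachPendant G v)) := by
  have : Nonempty G.edgeSet := hE.to_subtype
  have hR := G.ricciMatrix_isHermitian
  have hnonpos (x : G.edgeSet → ℝ) : x ⬝ᵥ ricciMatrix G *ᵥ x ≤ 0 := by
    simpa [h] using hR.dotProduct_mulVec_le_lambdaMax_mul x
  obtain ⟨w, hw, hRw⟩ := hR.exists_mulVec_eq_lambdaMax_smul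
  rw [h, zero_smul] at hRw
  have hQ : |w| ⬝ᵥ ricciMatrix G *ᵥ |w| = 0 := le_antisymm (hnonpos _) <| by
    simpa [hRw] using G.dotProduct_mulVec_ricciMatrix_le_abs w
  have hRabs := hR.mulVec_eq_zero_of_dotProduct_mulVec_eq_zero hnonpos hQ
  obtain ⟨e, hve, he⟩ : ∃ e : G.edgeSet, v ∈ (e : Sym2 V) ∧ |w| e ≠ 0 := by
    by_contra! hzero
    have := G.eq_zero_of_ricciMatrix_mulVec_eq_zero hT.connected.preconnected
      (fun e => abs_nonneg (w e)) hRabs hzero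
    exact hw (funext fun e => abs_eq_zero.1 (congrFun this e))
  obtain ⟨φ, hφ⟩ := attachPendant.exists_dotProduct_mulVec_ricciMatrix_pos hQ.ge hve he
  by_contra! hle
  have hφφ : 0 ≤ φ ⬝ᵥ φ := Finset.sum_nonneg fun i _ => mul_self_nonneg (φ i)
  linarith [(attachPendant G v).ricciMatrix_isHermitian.dotProduct_mulVec_le_lambdaMax_mul φ,
    mul_nonpos_of_nonpos_of_nonneg hle hφφ]
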